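/- For all x ∈ [0,1], √(2π)·exp(x + x²/2) − (1+exp(x))² < 0, and consequently the logistic function satisfies exp(x)/(1+exp(x)) ≤ Φ(x) on [0,1], where Φ is the standard Gaussian CDF. -/

import Mathlib

/-!
Since `(eˣ - 1)² = 4 eˣ sinh² (x/2) ≥ x² eˣ`, we have `(1 + eˣ)² ≥ (4 + x²) eˣ`; and for `x² ≤ 1`,
`√(2π) e^{x²/2} < 4 + x²` follows from `eᵘ ≤ 1 + u + u²` (`|u| ≤ 1`) and `√(2π) < 2.51`. This gives
the first inequality, which says that the derivative `eˣ/(1 + eˣ)²` of the logistic function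
lies below the Gaussian density on `[0, 1]`. As both functions equal `1/2` at `0`, the logistic
function stays below `Φ` on `[0, 1]`.
-/

open MeasureTheory

noncomputable def stdGaussianCDF (x : ℝ) : ℝ :=
  (Real.sqrt (2 * Real.pi))⁻¹ * ∫ t in Set.Iic x, Real.exp (-t ^ 2 / 2)

open Real Set

lemma sqrt_two_mul_pi_lt : √(2 * π) < 2.51 := by
  rw [sqrt_lt' (by norm_num)]
  linarith [pi_lt_d2]

lemma four_add_sq_mul_exp_le_one_add_exp_sq (x : ℝ) :
    (4 + x ^ 2) * exp x ≤ (1 + exp x) ^ 2 := by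
  have hsinh : (x / 2) ^ 2 ≤ sinh (x / 2) ^ 2 := by
    rw [← sq_abs (sinh _), abs_sinh, ← sq_abs (x / 2)]
    exact pow_le_pow_left₀ (abs_nonneg _) (self_le_sinh_iff.2 (abs_nonneg _)) 2
  have hsq : exp x = exp (x / 2) * exp (x / 2) := by rw [← exp_add, add_halves]
  have hinv : exp (x / 2) * exp (-(x / 2)) = 1 := by rw [← exp_add, add_neg_cancel, exp_zero]
  have hexp : (1 + exp x) ^ 2 - 4 * exp x = 4 * exp x * sinh (x / 2) ^ 2 := by
    rw [sinh_eq, hsq]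
    linear_combination (2 * exp (x / 2) ^ 2 - exp (x / 2) * exp (-(x / 2)) - 1) * hinv
  nlinarith [exp_pos x]

lemma sqrt_two_mul_pi_mul_exp_lt {x : ℝ} (hx : x ^ 2 ≤ 1) :
    √(2 * π) * exp (x ^ 2 / 2) < 4 + x ^ 2 := by
  have hu0 : 0 ≤ x ^ 2 / 2 := by positivity
  have hexp : exp (x ^ 2 / 2) ≤ 1 + x ^ 2 / 2 + (x ^ 2 / 2) ^ 2 := by
    have := abs_exp_sub_one_sub_id_le (x := x ^ 2 / 2) (by rw [abs_of_nonneg hu0]; linarith)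
    linarith [le_abs_self (exp (x ^ 2 / 2) - 1 - x ^ 2 / 2)]
  calc √(2 * π) * exp (x ^ 2 / 2) ≤ 2.51 * (1 + x ^ 2 / 2 + (x ^ 2 / 2) ^ 2) := by
        gcongr
        exact sqrt_two_mul_pi_lt.le
    _ < 4 + x ^ 2 := by nlinarith

lemma sqrt_two_mul_pi_mul_exp_lt_one_add_exp_sq {x : ℝ} (hx : x ^ 2 ≤ 1) :
    √(2 * π) * exp (x + x ^ 2 / 2) < (1 + exp x) ^ 2 :=
  calc √(2 * π) * exp (x + x ^ 2 / 2) = √(2 * π) * exp (x ^ 2 / 2) * exp x := by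
        rw [exp_add]; ring
    _ < (4 + x ^ 2) * exp x := by gcongr; exact sqrt_two_mul_pi_mul_exp_lt hx
    _ ≤ (1 + exp x) ^ 2 := four_add_sq_mul_exp_le_one_add_exp_sq x

lemma exp_div_one_add_exp_sq_lt {x : ℝ} (hx : x ^ 2 ≤ 1) :
    exp x / (1 + exp x) ^ 2 < (√(2 * π))⁻¹ * exp (-x ^ 2 / 2) := by
  have hs : 0 < √(2 * π) := by positivity
  rw [div_lt_iff₀ (by positivity), inv_mul_eq_div, div_mul_eq_mul_div, lt_div_iff₀ hs]
  calc exp x * √(2 * π) = √(2 * π) * exp (x + x ^ 2 / 2) * exp (-x ^ 2 / 2) := by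
        rw [mul_assoc, ← exp_add]; ring_nf
    _ < (1 + exp x) ^ 2 * exp (-x ^ 2 / 2) := by
        gcongr; exact sqrt_two_mul_pi_mul_exp_lt_one_add_exp_sq hx
    _ = exp (-x ^ 2 / 2) * (1 + exp x) ^ 2 := mul_comm _ _

lemma hasDerivAt_exp_div_one_add_exp (x : ℝ) :
    HasDerivAt (fun x ↦ exp x / (1 + exp x)) (exp x / (1 + exp x) ^ 2) x := by
  refine ((hasDerivAt_exp x).fun_div ((hasDerivAt_exp x).const_add 1)
    (by positivity)).congr_deriv ?_
  ring

lemma integrable_exp_neg_sq_div_two : Integrable fun t : ℝ ↦ exp (-t ^ 2 / 2) := by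
  simpa [neg_div, div_eq_inv_mul] using integrable_exp_neg_mul_sq (b := 1 / 2) (by norm_num)

lemma integral_Iic_zero_exp_neg_sq_div_two :
    ∫ t in Iic (0 : ℝ), exp (-t ^ 2 / 2) = √(2 * π) / 2 := by
  have h := integral_comp_neg_Iic 0 fun t : ℝ ↦ exp (-(1 / 2) * t ^ 2)
  simp only [neg_zero, even_two, Even.neg_pow] at h
  rw [integral_gaussian_Ioi, div_div_eq_mul_div, div_one, mul_comm] at h
  simpa [neg_div, div_eq_inv_mul] using h

lemma stdGaussianCDF_eq_half_add (x : ℝ) :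
    stdGaussianCDF x = 1 / 2 + (√(2 * π))⁻¹ * ∫ t in (0 : ℝ)..x, exp (-t ^ 2 / 2) := by
  have hs : √(2 * π) ≠ 0 := by positivity
  rw [stdGaussianCDF, ← intervalIntegral.integral_Iic_sub_Iic
    integrable_exp_neg_sq_div_two.integrableOn integrable_exp_neg_sq_div_two.integrableOn,
    integral_Iic_zero_exp_neg_sq_div_two]
  field_simp
  ring

lemma stdGaussianCDF_zero : stdGaussianCDF 0 = 1 / 2 := by
  simp [stdGaussianCDF_eq_half_add]

lemma hasDerivAt_stdGaussianCDF (x : ℝ) :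
    HasDerivAt stdGaussianCDF ((√(2 * π))⁻¹ * exp (-x ^ 2 / 2)) x := by
  simp_rw [funext stdGaussianCDF_eq_half_add]
  exact (((by fun_prop : Continuous fun t : ℝ ↦ exp (-t ^ 2 / 2)).integral_hasStrictDerivAt
    0 x).hasDerivAt.const_mul _).const_add _

theorem logistic_le_gaussianCDF_on_unit_interval :
    (∀ x ∈ Set.Icc (0 : ℝ) 1,
        Real.sqrt (2 * Real.pi) * Real.exp (x + x ^ 2 / 2) - (1 + Real.exp x) ^ 2 < 0) ∧
    (∀ x ∈ Set.Icc (0 : ℝ) 1,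
        Real.exp x / (1 + Real.exp x) ≤ stdGaussianCDF x) := by
  have hsq : ∀ x ∈ Icc (0 : ℝ) 1, x ^ 2 ≤ 1 := fun x hx ↦ pow_le_one₀ hx.1 hx.2
  refine ⟨fun x hx ↦ sub_neg.2 (sqrt_two_mul_pi_mul_exp_lt_one_add_exp_sq (hsq x hx)),
    fun x hx ↦ ?_⟩
  set g := fun x ↦ stdGaussianCDF x - exp x / (1 + exp x)
  have hg : ∀ x, HasDerivAt g ((√(2 * π))⁻¹ * exp (-x ^ 2 / 2) - exp x / (1 + exp x) ^ 2) x :=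
    fun x ↦ (hasDerivAt_stdGaussianCDF x).sub (hasDerivAt_exp_div_one_add_exp x)
  have hmono : MonotoneOn g (Icc 0 1) :=
    monotoneOn_of_hasDerivWithinAt_nonneg (convex_Icc 0 1)
      (fun x _ ↦ (hg x).continuousAt.continuousWithinAt) (fun x _ ↦ (hg x).hasDerivWithinAt)
      fun x hx ↦ sub_nonneg.2 (exp_div_one_add_exp_sq_lt
        (hsq x (interior_subset hx))).le
  have h0 : g 0 = 0 := by norm_num [g, stdGaussianCDF_zero]
  exact sub_nonneg.1 (h0 ▸ hmono (left_mem_Icc.2 zero_le_one) hx hx.1)
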